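/- arXiv:2110.10090 — 3 statements merged into one kernel-verified Lean document; each statement's English description precedes it below -/
import Mathlib

section
/- Let F_head be the class of attention heads f_head(X, z; θ_s, θ_in) = φ_out(φ_in(X; θ_in)^⊤ Norm(Score(x_1, z; θ_s), …, Score(x_T, z; θ_s))), with θ_s ranging over a parameter set Θ_s, θ_in over Θ_in, and φ_out fixed. Suppose: (i) φ_out is L_out-Lipschitz with respect to the ℓ² norm; (ii) ‖φ_in(a; θ_in)‖₂ ≤ B_in‖a‖₂ for all a ∈ ℝ^d and θ_in ∈ Θ_in; (iii) Norm : ℝ^T → Δ^{T−1} is continuously differentiable and its Jacobian satisfies ‖J Norm(θ)‖_{1,1} ≤ C_Norm for all θ ∈ ℝ^T. Then for every ε > 0, every α ∈ [0,1], and all inputs (X^(1), z^(1)), …, (X^(m), z^(m)) with ‖(X^(i))^⊤‖_{2,∞} ≤ B_X for all i ∈ [m], the covering numbers satisfy: log N_∞(F_head; ε; {(X^(i), z^(i))}_{i=1}^m; ‖·‖₂) ≤ log N_∞(F_Score; αε/(C_Norm·L_out·B_in·B_X); {(x_t^(i), z^(i))}_{i∈[m], t∈[T]}) + log N_∞(F_in;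 (1−α)ε/L_out; {x_t^(i)}_{i∈[m], t∈[T]}; ‖·‖₂), where F_Score = {(x, z) ↦ Score(x, z; θ_s) : θ_s ∈ Θ_s} and F_in = {x ↦ φ_in(x; θ_in) : θ_in ∈ Θ_in}. -/
open Matrix
open scoped BigOperators

noncomputable section

/-- Euclidean (ℓ²) norm of a vector. -/
def norm2 {d : ℕ} (v : Fin d → ℝ) : ℝ := Real.sqrt (∑ i, (v i) ^ 2)

/-- ∞-norm covering number (smallest cardinality of a proper cover of `F` on the sample
`z`, where closeness at each sample point is measured by `nrm` of the difference); `⊤` if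
no finite cover exists. -/
noncomputable def covNum {ι Z E : Type*} [Sub E] (nrm : E → ℝ) (F : Set (Z → E)) (ε : ℝ)
    (z : ι → Z) : ℕ∞ :=
  sInf {n : ℕ∞ | ∃ C : Finset (Z → E), ↑C ⊆ F ∧ (C.card : ℕ∞) = n ∧
    ∀ f ∈ F, ∃ g ∈ C, ∀ i, nrm (f (z i) - g (z i)) ≤ ε}

/-- A general attention head:
`f_head(X, z; θ_s, θ_in) = φ_out(φ_in(X; θ_in)^⊤ Norm(Score(x_1,z; θ_s), …, Score(x_T,z; θ_s)))`. -/
noncomputable def fhead {T d k d' : ℕ} {Θs Θin : Type*}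
    (Score : Θs → (Fin d → ℝ) → (Fin d → ℝ) → ℝ)
    (φin : Θin → (Fin d → ℝ) → (Fin k → ℝ))
    (φout : (Fin k → ℝ) → (Fin d' → ℝ))
    (Nrm : (Fin T → ℝ) → (Fin T → ℝ))
    (θs : Θs) (θin : Θin)
    (X : Matrix (Fin T) (Fin d) ℝ) (z : Fin d → ℝ) : Fin d' → ℝ :=
  φout (fun j => ∑ t, Nrm (fun t' => Score θs (X t') z) t * φin θin (X t) j)

/-- The class of attention heads, as `θ_s` ranges over `Θs` and `θ_in` over `Θin`. -/
def Fhead {T d k d' : ℕ} {Θs Θin : Type*}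
    (Score : Θs → (Fin d → ℝ) → (Fin d → ℝ) → ℝ)
    (φin : Θin → (Fin d → ℝ) → (Fin k → ℝ))
    (φout : (Fin k → ℝ) → (Fin d' → ℝ))
    (Nrm : (Fin T → ℝ) → (Fin T → ℝ)) :
    Set ((Matrix (Fin T) (Fin d) ℝ × (Fin d → ℝ)) → (Fin d' → ℝ)) :=
  {f | ∃ θs θin, f = fun p => fhead Score φin φout Nrm θs θin p.1 p.2}

/-- The class of alignment score functions. -/
def FScore {d : ℕ} {Θs : Type*} (Score : Θs → (Fin d → ℝ) → (Fin d → ℝ) → ℝ) :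
    Set (((Fin d → ℝ) × (Fin d → ℝ)) → ℝ) :=
  {f | ∃ θs, f = fun p => Score θs p.1 p.2}

/-- The class of input maps. -/
def FIn {d k : ℕ} {Θin : Type*} (φin : Θin → (Fin d → ℝ) → (Fin k → ℝ)) :
    Set ((Fin d → ℝ) → (Fin k → ℝ)) :=
  {f | ∃ θin, f = φin θin}

/-! ### Auxiliary lemmas -/

lemma norm2_eq_norm {d : ℕ} (v : Fin d → ℝ) :
    norm2 v = ‖(WithLp.toLp 2 v : EuclideanSpace ℝ (Fin d))‖ := by
  rw [EuclideanSpace.norm_eq]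
  unfold norm2
  congr 1
  exact Finset.sum_congr rfl fun i _ => by simp [Real.norm_eq_abs, sq_abs]

lemma norm2_nonneg' {d : ℕ} (v : Fin d → ℝ) : 0 ≤ norm2 v := Real.sqrt_nonneg _

lemma norm2_sum_le {d : ℕ} {ι : Type*} (s : Finset ι) (c : ι → Fin d → ℝ) :
    norm2 (fun j => ∑ t ∈ s, c t j) ≤ ∑ t ∈ s, norm2 (c t) := by
  have h := norm_sum_le (E := EuclideanSpace ℝ (Fin d)) s
    (fun t => (WithLp.toLp 2 (c t) : EuclideanSpace ℝ (Fin d)))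
  rw [norm2_eq_norm]
  refine le_trans (le_of_eq ?_) (h.trans (le_of_eq ?_))
  · congr 1
    ext j
    simp [Finset.sum_apply]
  · exact Finset.sum_congr rfl fun t _ => (norm2_eq_norm (c t)).symm

lemma norm2_add_le {d : ℕ} (u v : Fin d → ℝ) :
    norm2 (fun j => u j + v j) ≤ norm2 u + norm2 v := by
  rw [norm2_eq_norm, norm2_eq_norm, norm2_eq_norm]
  exact norm_add_le (E := EuclideanSpace ℝ (Fin d)) (WithLp.toLp 2 u) (WithLp.toLp 2 v)

lemma norm2_smul {d : ℕ} (r : ℝ) (v : Fin d → ℝ) :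
    norm2 (fun j => r * v j) = |r| * norm2 v := by
  rw [norm2_eq_norm, norm2_eq_norm]
  have : (WithLp.toLp 2 (fun j => r * v j) : EuclideanSpace ℝ (Fin d))
      = r • (WithLp.toLp 2 v : EuclideanSpace ℝ (Fin d)) := rfl
  rw [this, norm_smul, Real.norm_eq_abs]

lemma l1_diff_le {T : ℕ} (Nrm : (Fin T → ℝ) → (Fin T → ℝ)) (hdiff : ContDiff ℝ 1 Nrm)
    (C εs : ℝ) (hC : ∀ θ : Fin T → ℝ, ∑ i, ∑ j, |(fderiv ℝ Nrm θ) (Pi.single j 1) i| ≤ C)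
    (hεs : 0 ≤ εs) (s sh : Fin T → ℝ) (hδ : ∀ j, |s j - sh j| ≤ εs) :
    ∑ i, |Nrm s i - Nrm sh i| ≤ C * εs := by
  classical
  set δ : Fin T → ℝ := fun j => s j - sh j with hδdef
  set σ : Fin T → ℝ := fun i => if 0 ≤ Nrm s i - Nrm sh i then (1:ℝ) else -1 with hσdef
  have hσ_abs : ∀ i, σ i * (Nrm s i - Nrm sh i) = |Nrm s i - Nrm sh i| := by
    intro i
    rcases le_or_gt 0 (Nrm s i - Nrm sh i) with h | h
    · rw [abs_of_nonneg h]; simp only [hσdef]; rw [if_pos h, one_mul]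
    · rw [abs_of_neg h]; simp only [hσdef]; rw [if_neg (not_le.mpr h), neg_one_mul]
  set γ : ℝ → (Fin T → ℝ) := fun u => sh + u • δ with hγdef
  have hNd : Differentiable ℝ Nrm := hdiff.differentiable one_ne_zero
  set g : ℝ → ℝ := fun u => ∑ i, σ i * Nrm (γ u) i with hgdef
  set g' : ℝ → ℝ := fun u => ∑ i, σ i * ((fderiv ℝ Nrm (γ u)) δ i) with hg'def
  have hγd : ∀ u : ℝ, HasDerivAt γ δ u := by
    intro u
    have h1 : HasDerivAt (fun u : ℝ => u • δ) ((1:ℝ) • δ) u := (hasDerivAt_id u).smul_const δ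
    simpa [hγdef] using h1.const_add sh
  have hgd : ∀ u : ℝ, HasDerivAt g (g' u) u := by
    intro u
    have hcomp : HasDerivAt (fun u => Nrm (γ u)) ((fderiv ℝ Nrm (γ u)) δ) u :=
      (hNd (γ u)).hasFDerivAt.comp_hasDerivAt u (hγd u)
    have hpi := hasDerivAt_pi.1 hcomp
    exact HasDerivAt.fun_sum fun i _ => (hpi i).const_mul (σ i)
  have hDδ : ∀ θ : Fin T → ℝ, (fderiv ℝ Nrm θ) δ
      = ∑ j, δ j • (fderiv ℝ Nrm θ) (Pi.single j 1) := by
    intro θ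
    have : δ = ∑ j, δ j • (Pi.single j 1 : Fin T → ℝ) := by
      funext x
      simp [Finset.sum_apply, Pi.single_apply, mul_ite]
    conv_lhs => rw [this]
    rw [map_sum]
    exact Finset.sum_congr rfl fun j _ => (fderiv ℝ Nrm θ).map_smul _ _
  have hg'bound : ∀ u : ℝ, ‖g' u‖ ≤ C * εs := by
    intro u
    rw [Real.norm_eq_abs]
    calc |g' u| ≤ ∑ i, |σ i * ((fderiv ℝ Nrm (γ u)) δ i)| := Finset.abs_sum_le_sum_abs _ _
      _ ≤ ∑ i, ∑ j, |(fderiv ℝ Nrm (γ u)) (Pi.single j 1) i| * εs := by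
          apply Finset.sum_le_sum
          intro i _
          rw [abs_mul]
          have hσ1 : |σ i| = 1 := by
            simp only [hσdef]; split_ifs <;> simp
          rw [hσ1, one_mul]
          have : (fderiv ℝ Nrm (γ u)) δ i = ∑ j, δ j * (fderiv ℝ Nrm (γ u)) (Pi.single j 1) i := by
            rw [hDδ]
            simp [Finset.sum_apply]
          rw [this]
          calc |∑ j, δ j * (fderiv ℝ Nrm (γ u)) (Pi.single j 1) i|
              ≤ ∑ j, |δ j * (fderiv ℝ Nrm (γ u)) (Pi.single j 1) i| := Finset.abs_sum_le_sum_abs _ _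
            _ ≤ ∑ j, |(fderiv ℝ Nrm (γ u)) (Pi.single j 1) i| * εs := by
                apply Finset.sum_le_sum
                intro j _
                rw [abs_mul, mul_comm]
                exact mul_le_mul_of_nonneg_left (hδ j) (abs_nonneg _)
      _ = (∑ i, ∑ j, |(fderiv ℝ Nrm (γ u)) (Pi.single j 1) i|) * εs := by
          simp [Finset.sum_mul]
      _ ≤ C * εs := mul_le_mul_of_nonneg_right (hC (γ u)) hεs
  have hmvt : ‖g 1 - g 0‖ ≤ (C * εs) * ‖(1:ℝ) - 0‖ := by
    apply Convex.norm_image_sub_le_of_norm_hasDerivWithin_le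
      (f' := g') (fun x _ => (hgd x).hasDerivWithinAt) (fun x _ => hg'bound x) convex_univ
      (Set.mem_univ 0) (Set.mem_univ 1)
  have hγ1 : γ 1 = s := by funext x; simp [hγdef, hδdef]
  have hγ0 : γ 0 = sh := by funext x; simp [hγdef]
  have hg10 : g 1 - g 0 = ∑ i, |Nrm s i - Nrm sh i| := by
    rw [hgdef]
    simp only [hγ1, hγ0]
    rw [← Finset.sum_sub_distrib]
    exact Finset.sum_congr rfl fun i _ => by rw [← mul_sub]; exact hσ_abs i
  calc ∑ i, |Nrm s i - Nrm sh i| = g 1 - g 0 := hg10.symm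
    _ ≤ ‖g 1 - g 0‖ := le_abs_self _
    _ ≤ (C * εs) * ‖(1:ℝ) - 0‖ := hmvt
    _ = C * εs := by simp

lemma covNum_le_card {ι Z E : Type*} [Sub E] (nrm : E → ℝ) (F : Set (Z → E)) (ε : ℝ) (z : ι → Z)
    (C : Finset (Z → E)) (h1 : ↑C ⊆ F)
    (h2 : ∀ f ∈ F, ∃ g ∈ C, ∀ i, nrm (f (z i) - g (z i)) ≤ ε) :
    covNum nrm F ε z ≤ C.card := sInf_le ⟨C, h1, rfl, h2⟩

lemma covNum_attained {ι Z E : Type*} [Sub E] (nrm : E → ℝ) (F : Set (Z → E)) (ε : ℝ)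
    (z : ι → Z) (h : covNum nrm F ε z ≠ ⊤) :
    ∃ C : Finset (Z → E), ↑C ⊆ F ∧ (C.card : ℕ∞) = covNum nrm F ε z ∧
      ∀ f ∈ F, ∃ g ∈ C, ∀ i, nrm (f (z i) - g (z i)) ≤ ε := by
  set S := {n : ℕ∞ | ∃ C : Finset (Z → E), ↑C ⊆ F ∧ (C.card : ℕ∞) = n ∧
    ∀ f ∈ F, ∃ g ∈ C, ∀ i, nrm (f (z i) - g (z i)) ≤ ε} with hS
  have hne : S.Nonempty := by
    by_contra hc
    rw [Set.not_nonempty_iff_eq_empty] at hc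
    exact h (by rw [covNum, ← hS, hc, sInf_empty])
  obtain ⟨n, hnS, hmin⟩ := wellFounded_lt.has_min S hne
  have heq : covNum nrm F ε z = n :=
    le_antisymm (sInf_le hnS) (le_sInf fun b hb => not_lt.mp (hmin b hb))
  obtain ⟨C, h1, h2, h3⟩ := hnS
  exact ⟨C, h1, by rw [heq, h2], h3⟩

lemma covNum_ne_zero {ι Z E : Type*} [Sub E] (nrm : E → ℝ) (F : Set (Z → E)) (ε : ℝ)
    (z : ι → Z) (hF : F.Nonempty) : covNum nrm F ε z ≠ 0 := by
  intro hc
  have h1 : (1 : ℕ∞) ≤ covNum nrm F ε z := by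
    apply le_sInf
    rintro b ⟨C, hsub, rfl, h3⟩
    obtain ⟨f, hf⟩ := hF
    obtain ⟨g, hg, -⟩ := h3 f hf
    exact_mod_cast Nat.one_le_iff_ne_zero.mpr (Finset.card_ne_zero_of_mem hg)
  rw [hc] at h1
  simp at h1

/-- The core quantitative estimate on the difference of two attention heads. -/
lemma head_diff_bound {T d k d' : ℕ} {Θs Θin : Type*}
    (Score : Θs → (Fin d → ℝ) → (Fin d → ℝ) → ℝ)
    (φin : Θin → (Fin d → ℝ) → (Fin k → ℝ))
    (φout : (Fin k → ℝ) → (Fin d' → ℝ))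
    (Nrm : (Fin T → ℝ) → (Fin T → ℝ))
    (Lout Bin CNorm BX : ℝ)
    (hout : ∀ a b : Fin k → ℝ,
      norm2 (fun j => φout a j - φout b j) ≤ Lout * norm2 (fun j => a j - b j))
    (hin : ∀ (θ : Θin) (a : Fin d → ℝ), norm2 (φin θ a) ≤ Bin * norm2 a)
    (hNrmDiff : ContDiff ℝ 1 Nrm)
    (hNrmJac : ∀ θ : Fin T → ℝ, ∑ i, ∑ j, |(fderiv ℝ Nrm θ) (Pi.single j 1) i| ≤ CNorm)
    (hNrmSimplex : ∀ θ : Fin T → ℝ, (∀ t, 0 ≤ Nrm θ t) ∧ ∑ t, Nrm θ t = 1)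
    (hLout : 0 ≤ Lout) (hBin : 0 ≤ Bin) (hBX : 0 ≤ BX)
    (εs εin : ℝ) (hεs : 0 ≤ εs)
    (θs θs' : Θs) (θi θi' : Θin) (X : Matrix (Fin T) (Fin d) ℝ) (z : Fin d → ℝ)
    (hXB : ∀ t, norm2 (X t) ≤ BX)
    (hs : ∀ t, |Score θs (X t) z - Score θs' (X t) z| ≤ εs)
    (hi : ∀ t, norm2 (fun j => φin θi (X t) j - φin θi' (X t) j) ≤ εin) :
    norm2 (fun j => fhead Score φin φout Nrm θs θi X z j
        - fhead Score φin φout Nrm θs' θi' X z j)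
      ≤ Lout * (CNorm * εs * (Bin * BX) + εin) := by
  set p : Fin T → ℝ := Nrm (fun t' => Score θs (X t') z) with hp
  set p' : Fin T → ℝ := Nrm (fun t' => Score θs' (X t') z) with hp'
  set a : Fin T → Fin k → ℝ := fun t => φin θi (X t) with ha
  set a' : Fin T → Fin k → ℝ := fun t => φin θi' (X t) with ha'
  have hmain : norm2 (fun j => (∑ t, p t * a t j) - (∑ t, p' t * a' t j))
      ≤ CNorm * εs * (Bin * BX) + εin := by
    have hsplit : (fun j => (∑ t, p t * a t j) - (∑ t, p' t * a' t j))
        = fun j => (∑ t, (p t - p' t) * a t j) + (∑ t, p' t * (a t j - a' t j)) := by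
      funext j
      rw [← Finset.sum_add_distrib, ← Finset.sum_sub_distrib]
      exact Finset.sum_congr rfl fun t _ => by ring
    rw [hsplit]
    have h1 : norm2 (fun j => ∑ t, (p t - p' t) * a t j) ≤ CNorm * εs * (Bin * BX) := by
      calc norm2 (fun j => ∑ t, (p t - p' t) * a t j)
          ≤ ∑ t, norm2 (fun j => (p t - p' t) * a t j) := norm2_sum_le _ _
        _ = ∑ t, |p t - p' t| * norm2 (a t) := Finset.sum_congr rfl fun t _ => norm2_smul _ _
        _ ≤ ∑ t, |p t - p' t| * (Bin * BX) := by
            apply Finset.sum_le_sum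
            intro t _
            apply mul_le_mul_of_nonneg_left _ (abs_nonneg _)
            exact (hin θi (X t)).trans (mul_le_mul_of_nonneg_left (hXB t) hBin)
        _ = (∑ t, |p t - p' t|) * (Bin * BX) := by rw [Finset.sum_mul]
        _ ≤ (CNorm * εs) * (Bin * BX) := by
            exact mul_le_mul_of_nonneg_right
              (l1_diff_le Nrm hNrmDiff CNorm εs hNrmJac hεs _ _ fun t => hs t)
              (mul_nonneg hBin hBX)
        _ = CNorm * εs * (Bin * BX) := by ring
    have h2 : norm2 (fun j => ∑ t, p' t * (a t j - a' t j)) ≤ εin := by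
      obtain ⟨hpos, hsum⟩ := hNrmSimplex (fun t' => Score θs' (X t') z)
      calc norm2 (fun j => ∑ t, p' t * (a t j - a' t j))
          ≤ ∑ t, norm2 (fun j => p' t * (a t j - a' t j)) := norm2_sum_le _ _
        _ = ∑ t, |p' t| * norm2 (fun j => a t j - a' t j) := Finset.sum_congr rfl fun t _ => norm2_smul _ _
        _ ≤ ∑ t, p' t * εin := by
            apply Finset.sum_le_sum
            intro t _
            rw [abs_of_nonneg (hpos t)]
            exact mul_le_mul_of_nonneg_left (hi t) (hpos t)
        _ = εin := by rw [← Finset.sum_mul, hsum, one_mul]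
    calc norm2 (fun j => (∑ t, (p t - p' t) * a t j) + (∑ t, p' t * (a t j - a' t j)))
        ≤ norm2 (fun j => ∑ t, (p t - p' t) * a t j)
          + norm2 (fun j => ∑ t, p' t * (a t j - a' t j)) := norm2_add_le _ _
      _ ≤ CNorm * εs * (Bin * BX) + εin := add_le_add h1 h2
  calc norm2 (fun j => fhead Score φin φout Nrm θs θi X z j
        - fhead Score φin φout Nrm θs' θi' X z j)
      ≤ Lout * norm2 (fun j => (∑ t, p t * a t j) - (∑ t, p' t * a' t j)) := hout _ _
    _ ≤ Lout * (CNorm * εs * (Bin * BX) + εin) := mul_le_mul_of_nonneg_left hmain hLout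

/-- attention head capacity: under the stated assumptions on `φ_out`, `φ_in`
and `Norm`, the covering number of the attention-head class on `m` samples is bounded by
the product of the covering number of the score class (at radius `αε/(C_Norm·L_out·B_in·B_X)`,
on the `m·T` individual tokens) and the covering number of the input-map class (at radius
`(1−α)ε/L_out`).  Taking logarithms, this is exactly
`log N_∞(F_head; ε) ≤ log N_∞(F_Score; ·) + log N_∞(F_in; ·)`;
the product form is used so that the statement is also meaningful when a class admits no
finite cover. -/
theorem attention_head_covering {T d k d' : ℕ} {Θs Θin : Type*}
    (Score : Θs → (Fin d → ℝ) → (Fin d → ℝ) → ℝ)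
    (φin : Θin → (Fin d → ℝ) → (Fin k → ℝ))
    (φout : (Fin k → ℝ) → (Fin d' → ℝ))
    (Nrm : (Fin T → ℝ) → (Fin T → ℝ))
    (Lout Bin CNorm BX : ℝ)
    (hout : ∀ a b : Fin k → ℝ, norm2 (fun j => φout a j - φout b j) ≤ Lout * norm2 (fun j => a j - b j))
    (hin : ∀ (θ : Θin) (a : Fin d → ℝ), norm2 (φin θ a) ≤ Bin * norm2 a)
    (hNrmDiff : ContDiff ℝ 1 Nrm)
    (hNrmJac : ∀ θ : Fin T → ℝ, ∑ i, ∑ j, |(fderiv ℝ Nrm θ) (Pi.single j 1) i| ≤ CNorm)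
    (hNrmSimplex : ∀ θ : Fin T → ℝ, (∀ t, 0 ≤ Nrm θ t) ∧ ∑ t, Nrm θ t = 1)
    (hLout : 0 < Lout) (hBin : 0 < Bin) (hCNorm : 0 < CNorm) (hBX : 0 < BX)
    (ε α : ℝ) (hε : 0 < ε) (hα0 : 0 ≤ α) (hα1 : α ≤ 1)
    {m : ℕ} (X : Fin m → Matrix (Fin T) (Fin d) ℝ) (z : Fin m → (Fin d → ℝ))
    (hX : ∀ i t, norm2 (X i t) ≤ BX) :
    covNum norm2 (Fhead Score φin φout Nrm) ε (fun i => (X i, z i)) ≤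
      covNum (fun r : ℝ => |r|) (FScore Score) (α * ε / (CNorm * Lout * Bin * BX))
          (fun p : Fin m × Fin T => (X p.1 p.2, z p.1)) *
        covNum norm2 (FIn φin) ((1 - α) * ε / Lout)
          (fun p : Fin m × Fin T => X p.1 p.2) := by
  classical
  set εS := α * ε / (CNorm * Lout * Bin * BX) with hεS
  set εI := (1 - α) * ε / Lout with hεI
  have hεS0 : 0 ≤ εS := div_nonneg (mul_nonneg hα0 hε.le) (by positivity)
  have hεI0 : 0 ≤ εI := div_nonneg (mul_nonneg (by linarith) hε.le) hLout.le
  have hkey : Lout * (CNorm * εS * (Bin * BX) + εI) = ε := by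
    rw [hεS, hεI]
    have h1 : CNorm ≠ 0 := ne_of_gt hCNorm
    have h2 : Lout ≠ 0 := ne_of_gt hLout
    have h3 : Bin ≠ 0 := ne_of_gt hBin
    have h4 : BX ≠ 0 := ne_of_gt hBX
    field_simp
    ring
  rcases Set.eq_empty_or_nonempty (Fhead Score φin φout Nrm) with hemp | hne
  · have h0 := covNum_le_card norm2 (Fhead Score φin φout Nrm) ε (fun i => (X i, z i)) ∅
      (by simp) (by intro f hf; rw [hemp] at hf; exact absurd hf (Set.notMem_empty f))
    simp only [Finset.card_empty, Nat.cast_zero, nonpos_iff_eq_zero] at h0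
    rw [h0]
    exact zero_le
  obtain ⟨f0, θs0, θi0, -⟩ := hne
  have hFSne : (FScore Score).Nonempty := ⟨_, θs0, rfl⟩
  have hFIne : (FIn φin).Nonempty := ⟨_, θi0, rfl⟩
  set NS := covNum (fun r : ℝ => |r|) (FScore Score) εS
    (fun p : Fin m × Fin T => (X p.1 p.2, z p.1)) with hNS
  set NI := covNum norm2 (FIn φin) εI (fun p : Fin m × Fin T => X p.1 p.2) with hNI
  by_cases hStop : NS = ⊤
  · rw [hStop, ENat.top_mul (covNum_ne_zero _ _ _ _ hFIne)]
    exact le_top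
  by_cases hItop : NI = ⊤
  · rw [hItop, ENat.mul_top (covNum_ne_zero _ _ _ _ hFSne)]
    exact le_top
  obtain ⟨Cs, hCs_sub, hCs_card, hCs_cov⟩ := covNum_attained _ _ _ _ hStop
  obtain ⟨Ci, hCi_sub, hCi_card, hCi_cov⟩ := covNum_attained _ _ _ _ hItop
  set ΦS : (((Fin d → ℝ) × (Fin d → ℝ)) → ℝ) → Θs := fun g =>
    if h : ∃ θ : Θs, g = fun p => Score θ p.1 p.2 then h.choose else θs0 with hΦS
  set ΦI : ((Fin d → ℝ) → (Fin k → ℝ)) → Θin := fun g =>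
    if h : ∃ θ : Θin, g = φin θ then h.choose else θi0 with hΦI
  set D : Finset ((Matrix (Fin T) (Fin d) ℝ × (Fin d → ℝ)) → (Fin d' → ℝ)) :=
    (Cs ×ˢ Ci).image
      (fun q => fun p => fhead Score φin φout Nrm (ΦS q.1) (ΦI q.2) p.1 p.2) with hD
  have hD_sub : ↑D ⊆ Fhead Score φin φout Nrm := by
    intro f hf
    simp only [hD, Finset.coe_image, Set.mem_image] at hf
    obtain ⟨q, -, rfl⟩ := hf
    exact ⟨_, _, rfl⟩
  have hD_cov : ∀ f ∈ Fhead Score φin φout Nrm,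
      ∃ g ∈ D, ∀ i, norm2 (f (X i, z i) - g (X i, z i)) ≤ ε := by
    rintro f ⟨θs, θi, rfl⟩
    obtain ⟨gs, hgs, hgs_close⟩ := hCs_cov (fun p => Score θs p.1 p.2) ⟨θs, rfl⟩
    obtain ⟨gi, hgi, hgi_close⟩ := hCi_cov (φin θi) ⟨θi, rfl⟩
    refine ⟨_, Finset.mem_image_of_mem _ (Finset.mem_product.mpr ⟨hgs, hgi⟩ : (gs, gi) ∈ Cs ×ˢ Ci), ?_⟩
    intro i
    have hgs_ex : ∃ θ : Θs, gs = fun p => Score θ p.1 p.2 := hCs_sub hgs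
    have hgs_eq : gs = fun p => Score (ΦS gs) p.1 p.2 := by
      rw [hΦS]
      simp only [dif_pos hgs_ex]
      exact hgs_ex.choose_spec
    have hgi_ex : ∃ θ : Θin, gi = φin θ := hCi_sub hgi
    have hgi_eq : gi = φin (ΦI gi) := by
      rw [hΦI]
      simp only [dif_pos hgi_ex]
      exact hgi_ex.choose_spec
    have hsc : ∀ t, |Score θs (X i t) (z i) - Score (ΦS gs) (X i t) (z i)| ≤ εS := by
      intro t
      have h := hgs_close (i, t)
      rw [hgs_eq] at h
      exact h
    have hic : ∀ t, norm2 (fun j => φin θi (X i t) j - φin (ΦI gi) (X i t) j) ≤ εI := by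
      intro t
      have h := hgi_close (i, t)
      rw [hgi_eq] at h
      exact h
    have hb := head_diff_bound Score φin φout Nrm Lout Bin CNorm BX hout hin hNrmDiff hNrmJac
      hNrmSimplex hLout.le hBin.le hBX.le εS εI hεS0 θs (ΦS gs) θi (ΦI gi) (X i) (z i)
      (fun t => hX i t) hsc hic
    exact hb.trans (le_of_eq hkey)
  have hle := covNum_le_card norm2 (Fhead Score φin φout Nrm) ε (fun i => (X i, z i))
    D hD_sub hD_cov
  refine hle.trans ?_
  calc (D.card : ℕ∞) ≤ ((Cs ×ˢ Ci).card : ℕ∞) := by exact_mod_cast Finset.card_image_le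
    _ = ((Cs.card * Ci.card : ℕ) : ℕ∞) := by rw [Finset.card_product]
    _ = (Cs.card : ℕ∞) * (Ci.card : ℕ∞) := by exact_mod_cast rfl
    _ = NS * NI := by rw [hCs_card, hCi_card]
end
end

section
/- Let σ : ℝ → ℝ be an activation function for which there exists c ∈ ℝ such that σ(a) > c whenever a > 1/2 and σ(b) < c whenever b < 1/2. Let T ≥ 2 and set n = ⌊log₂ T⌋. Then the class of scalar-output self-attention heads with embedding dimension d = 3, F = {X ↦ σ(w_V^⊤ X^⊤ softmax(X w_QK)) : w_V, w_QK ∈ ℝ^3}, on inputs X ∈ ℝ^{T×3}, has pseudo-dimension at least n; concretely, there exist inputs X^(1), …, X^(n) ∈ ℝ^{T×3} such that for every subset S ⊆ [n] there exist w_V, w_QK ∈ ℝ^3 with σ(w_V^⊤ (X^(i))^⊤ softmax(X^(i) w_QK)) > c for every i ∈ S and σ(w_V^⊤ (X^(i))^⊤ softmax(X^(i) w_QK)) < c for every i ∉ S. -/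
open scoped BigOperators

noncomputable section

/-- The softmax map on ℝ^T. -/
def softmax {T : ℕ} (z : Fin T → ℝ) : Fin T → ℝ :=
  fun t => Real.exp (z t) / ∑ u, Real.exp (z u)

/-- A scalar-output self-attention head with embedding dimension 3:
`X ↦ σ(w_V^⊤ X^⊤ softmax(X w_QK))`. -/
noncomputable def attnScalar {T : ℕ} (σ : ℝ → ℝ) (wV wQK : Fin 3 → ℝ)
    (X : Matrix (Fin T) (Fin 3) ℝ) : ℝ :=
  σ (∑ t, softmax (fun u => ∑ j, X u j * wQK j) t * ∑ j, wV j * X t j)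

private lemma softmax_shift {T : ℕ} [Nonempty (Fin T)] (z : Fin T → ℝ) (m t : Fin T) :
    softmax z t = Real.exp (z t - z m) / ∑ u, Real.exp (z u - z m) := by
  have hK : Real.exp (z m) ≠ 0 := (Real.exp_pos _).ne'
  simp only [softmax, Real.exp_sub, ← Finset.sum_div]
  rw [div_div_div_cancel_right₀ hK]

private lemma softmax_limit {T : ℕ} [Nonempty (Fin T)] (cf : Fin T → ℝ) (m : Fin T)
    (hgap : ∀ t : Fin T, t ≠ m → cf t < cf m) (v : Fin T → ℝ) :
    Filter.Tendsto (fun R : ℝ => ∑ t, softmax (fun u => R * cf u) t * v t)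
      Filter.atTop (nhds (v m)) := by
  have hEtend : ∀ t : Fin T, Filter.Tendsto (fun R : ℝ => Real.exp (R * cf t - R * cf m))
      Filter.atTop (nhds (if t = m then 1 else 0)) := by
    intro t
    by_cases ht : t = m
    · subst ht
      simp only [sub_self, Real.exp_zero, if_pos rfl]
      exact tendsto_const_nhds
    · simp only [if_neg ht]
      have h1 : Filter.Tendsto (fun R : ℝ => R * (cf t - cf m)) Filter.atTop Filter.atBot :=
        Filter.Tendsto.atTop_mul_const_of_neg (sub_neg.2 (hgap t ht)) Filter.tendsto_id
      exact (Real.tendsto_exp_atBot.comp h1).congr fun R => by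
        simp [Function.comp]; ring_nf
  have hD : Filter.Tendsto (fun R : ℝ => ∑ u : Fin T, Real.exp (R * cf u - R * cf m))
      Filter.atTop (nhds 1) := by
    have := tendsto_finset_sum (Finset.univ : Finset (Fin T)) (fun u _ => hEtend u)
    simpa [Finset.sum_ite_eq' Finset.univ m] using this
  have hnum : Filter.Tendsto (fun R : ℝ => ∑ t, Real.exp (R * cf t - R * cf m) * v t)
      Filter.atTop (nhds (v m)) := by
    have := tendsto_finset_sum (Finset.univ : Finset (Fin T))
      (fun t _ => (hEtend t).mul_const (v t))
    simpa [Finset.sum_ite_eq' Finset.univ m] using this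
  have hdiv := hnum.div hD one_ne_zero
  simp only [div_one] at hdiv
  have heq : ∀ R : ℝ, (∑ t, Real.exp (R * cf t - R * cf m) * v t) /
      (∑ u : Fin T, Real.exp (R * cf u - R * cf m)) =
      ∑ t, softmax (fun u => R * cf u) t * v t := by
    intro R
    rw [Finset.sum_div]
    refine Finset.sum_congr rfl fun t _ => ?_
    rw [softmax_shift _ m t, div_mul_eq_mul_div]
  refine hdiv.congr fun R => heq R

private lemma sum_range_two_pow_lt (n : ℕ) : ∑ i ∈ Finset.range n, 2 ^ i < 2 ^ n := by
  induction n with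
  | zero => simp
  | succ k ih => rw [Finset.sum_range_succ, pow_succ]; omega

/-- the class of (unbounded-norm) scalar self-attention heads with embedding
dimension 3 shatters `⌊log₂ T⌋` inputs (with thresholds at level `c`), hence has
pseudo-dimension at least `⌊log₂ T⌋`. -/
theorem attention_pseudodim_lower_bound (σ : ℝ → ℝ) (c : ℝ)
    (hσhi : ∀ a : ℝ, 1 / 2 < a → c < σ a)
    (hσlo : ∀ b : ℝ, b < 1 / 2 → σ b < c)
    (T : ℕ) (hT : 2 ≤ T) :
    ∃ X : Fin (Nat.log 2 T) → Matrix (Fin T) (Fin 3) ℝ,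
      ∀ S : Finset (Fin (Nat.log 2 T)), ∃ wV wQK : Fin 3 → ℝ,
        ∀ i : Fin (Nat.log 2 T),
          (i ∈ S → c < attnScalar σ wV wQK (X i)) ∧
          (i ∉ S → attnScalar σ wV wQK (X i) < c) := by
  classical
  haveI : Nonempty (Fin T) := ⟨⟨0, by omega⟩⟩
  set n := Nat.log 2 T with hn
  -- value pattern: bit i of t
  have v : Fin n → Fin T → ℝ :=
    fun i t => if (i : ℕ) ∈ (Nat.bitIndices (t : ℕ)).toFinset then 1 else 0
  refine ⟨fun i => Matrix.of fun (t : Fin T) (j : Fin 3) =>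
      if j = 0 then (t : ℝ) else if j = 1 then (t : ℝ) ^ 2
      else (if (i : ℕ) ∈ (Nat.bitIndices (t : ℕ)).toFinset then 1 else 0), ?_⟩
  intro S
  set S' : Finset ℕ := S.image Fin.val with hS'
  have hS'sub : S' ⊆ Finset.range n := by
    intro j hj
    rw [hS', Finset.mem_image] at hj
    obtain ⟨i, _, rfl⟩ := hj
    exact Finset.mem_range.2 i.isLt
  have hmT : (∑ j ∈ S', 2 ^ j) < T :=
    calc ∑ j ∈ S', 2 ^ j ≤ ∑ j ∈ Finset.range n, 2 ^ j :=
          Finset.sum_le_sum_of_subset hS'sub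
      _ < 2 ^ n := sum_range_two_pow_lt n
      _ ≤ T := Nat.pow_log_le_self 2 (by omega)
  set mN : ℕ := ∑ j ∈ S', 2 ^ j with hmN
  set m : Fin T := ⟨mN, hmT⟩ with hm
  have hbits : (Nat.bitIndices mN).toFinset = S' := Finset.toFinset_bitIndices_twoPowSum S'
  have hmem : ∀ i : Fin n, ((i : ℕ) ∈ (Nat.bitIndices ((m : Fin T) : ℕ)).toFinset) ↔ i ∈ S := by
    intro i
    show ((i : ℕ) ∈ (Nat.bitIndices mN).toFinset) ↔ i ∈ S
    rw [hbits, hS']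
    exact Fin.val_injective.mem_finset_image
  -- score coefficients
  have hgap : ∀ t : Fin T, t ≠ m →
      (2 * (mN : ℝ) * (t : ℝ) - (t : ℝ) ^ 2) < (2 * (mN : ℝ) * (m : ℝ) - (m : ℝ) ^ 2) := by
    intro t ht
    have hne : (t : ℝ) ≠ ((m : Fin T) : ℝ) := by
      exact_mod_cast fun h => ht (Fin.val_injective (by exact_mod_cast h))
    have h2 : (0 : ℝ) < ((t : ℝ) - ((m : Fin T) : ℝ)) ^ 2 := by
      have := sub_ne_zero.2 hne
      positivity
    have hmval : ((m : Fin T) : ℝ) = (mN : ℝ) := by rw [hm]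
    rw [hmval] at h2 ⊢
    nlinarith [h2]
  have hlim : ∀ i : Fin n,
      Filter.Tendsto (fun R : ℝ => ∑ t : Fin T,
          softmax (fun u : Fin T => R * (2 * (mN : ℝ) * (u : ℝ) - (u : ℝ) ^ 2)) t *
          (if (i : ℕ) ∈ (Nat.bitIndices (t : ℕ)).toFinset then (1:ℝ) else 0))
        Filter.atTop
        (nhds (if (i : ℕ) ∈ (Nat.bitIndices ((m : Fin T) : ℕ)).toFinset then (1:ℝ) else 0)) :=
    fun i => softmax_limit (fun t => 2 * (mN : ℝ) * (t : ℝ) - (t : ℝ) ^ 2) m hgap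
      (fun t => if (i : ℕ) ∈ (Nat.bitIndices (t : ℕ)).toFinset then (1:ℝ) else 0)
  -- unfolding attnScalar
  have hattn : ∀ i : Fin n, ∀ R : ℝ,
      attnScalar σ ![0, 0, 1] ![R * (2 * (mN : ℝ)), -R, 0]
        (Matrix.of fun (t : Fin T) (j : Fin 3) =>
          if j = 0 then (t : ℝ) else if j = 1 then (t : ℝ) ^ 2
          else (if (i : ℕ) ∈ (Nat.bitIndices (t : ℕ)).toFinset then 1 else 0)) =
      σ (∑ t : Fin T, softmax (fun u : Fin T => R * (2 * (mN : ℝ) * (u : ℝ) - (u : ℝ) ^ 2)) t *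
          (if (i : ℕ) ∈ (Nat.bitIndices (t : ℕ)).toFinset then (1:ℝ) else 0)) := by
    intro i R
    rw [attnScalar]
    congr 1
    have h1 : (fun u : Fin T => ∑ j, (Matrix.of fun (t : Fin T) (j : Fin 3) =>
          if j = 0 then (t : ℝ) else if j = 1 then (t : ℝ) ^ 2
          else (if (i : ℕ) ∈ (Nat.bitIndices (t : ℕ)).toFinset then 1 else 0)) u j *
          (![R * (2 * (mN : ℝ)), -R, 0] : Fin 3 → ℝ) j) =
        fun u : Fin T => R * (2 * (mN : ℝ) * (u : ℝ) - (u : ℝ) ^ 2) := by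
      funext u
      rw [Fin.sum_univ_three]
      norm_num [Matrix.of_apply, Matrix.cons_val]
      rw [if_neg (by decide : ¬ (2 : Fin 3) = 0), if_neg (by decide : ¬ (2 : Fin 3) = 1)]
      simp [Matrix.cons_val_two, Matrix.vecHead, Matrix.vecTail]
      ring
    rw [h1]
    refine Finset.sum_congr rfl fun t _ => ?_
    congr 1
    rw [Fin.sum_univ_three]
    norm_num [Matrix.of_apply]
    rw [if_neg (by decide : ¬ (2 : Fin 3) = 0), if_neg (by decide : ¬ (2 : Fin 3) = 1)]
    simp [Matrix.cons_val]
  -- eventual correctness, per i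
  have hev : ∀ i : Fin n, ∀ᶠ R in Filter.atTop,
      (i ∈ S → c < attnScalar σ ![0, 0, 1] ![R * (2 * (mN : ℝ)), -R, 0]
        (Matrix.of fun (t : Fin T) (j : Fin 3) =>
          if j = 0 then (t : ℝ) else if j = 1 then (t : ℝ) ^ 2
          else (if (i : ℕ) ∈ (Nat.bitIndices (t : ℕ)).toFinset then 1 else 0))) ∧
      (i ∉ S → attnScalar σ ![0, 0, 1] ![R * (2 * (mN : ℝ)), -R, 0]
        (Matrix.of fun (t : Fin T) (j : Fin 3) =>
          if j = 0 then (t : ℝ) else if j = 1 then (t : ℝ) ^ 2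
          else (if (i : ℕ) ∈ (Nat.bitIndices (t : ℕ)).toFinset then 1 else 0)) < c) := by
    intro i
    by_cases hi : i ∈ S
    · have h1 : (if (i : ℕ) ∈ (Nat.bitIndices ((m : Fin T) : ℕ)).toFinset then (1:ℝ) else 0)
          = 1 := by rw [if_pos ((hmem i).2 hi)]
      have hl := hlim i
      rw [h1] at hl
      have hev1 := hl.eventually (eventually_gt_nhds (by norm_num : (1:ℝ)/2 < 1))
      filter_upwards [hev1] with R hR
      exact ⟨fun _ => by rw [hattn i R]; exact hσhi _ hR, fun h => absurd hi h⟩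
    · have h1 : (if (i : ℕ) ∈ (Nat.bitIndices ((m : Fin T) : ℕ)).toFinset then (1:ℝ) else 0)
          = 0 := by rw [if_neg (fun h => hi ((hmem i).1 h))]
      have hl := hlim i
      rw [h1] at hl
      have hev1 := hl.eventually (eventually_lt_nhds (by norm_num : (0:ℝ) < 1/2))
      filter_upwards [hev1] with R hR
      exact ⟨fun h => absurd h hi, fun _ => by rw [hattn i R]; exact hσlo _ hR⟩
  obtain ⟨R, hR⟩ := (Filter.eventually_all.2 hev).exists
  exact ⟨![0, 0, 1], ![R * (2 * (mN : ℝ)), -R, 0], hR⟩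
end
end

section
/- Let 1 ≤ s ≤ T and R ≥ 0. Let z ∈ ℝ^T satisfy z_t ≥ R for 1 ≤ t ≤ s and z_t ≤ 0 for s+1 ≤ t ≤ T. Define p' ∈ ℝ^T by p'_t = exp(z_t)/(Σ_{u=1}^s exp(z_u)) for 1 ≤ t ≤ s and p'_t = 0 for s+1 ≤ t ≤ T. Then ‖p' − softmax(z)‖₁ ≤ 2(T − s)/(s·exp(R)). -/
open scoped BigOperators

noncomputable section

/-- softmax truncation: if the first `s` coordinates of `z` are at least `R ≥ 0`
and the remaining `T − s` coordinates are at most `0`, then the softmax of `z` is within ℓ¹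
distance `2(T−s)/(s·exp R)` of the distribution `p'` obtained by restricting (and renormalizing)
the softmax to the first `s` coordinates. -/
theorem softmax_truncation {T : ℕ} (s : ℕ) (hs1 : 1 ≤ s) (hsT : s ≤ T) (R : ℝ) (hR : 0 ≤ R)
    (z : Fin T → ℝ)
    (hlow : ∀ t : Fin T, (t : ℕ) < s → R ≤ z t)
    (hhigh : ∀ t : Fin T, s ≤ (t : ℕ) → z t ≤ 0) :
    ∑ t : Fin T, |(if (t : ℕ) < s then
            Real.exp (z t) / ∑ u ∈ Finset.univ.filter (fun u : Fin T => (u : ℕ) < s), Real.exp (z u)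
          else 0) - softmax z t| ≤ 2 * ((T : ℝ) - s) / (s * Real.exp R) := by
  classical
  set F := Finset.univ.filter (fun t : Fin T => (t : ℕ) < s) with hF
  set A := ∑ u ∈ F, Real.exp (z u) with hA
  set B := ∑ u ∈ Fᶜ, Real.exp (z u) with hB
  have hcardF : F.card = s := by
    rw [show F = (Finset.range s).attachFin
        (fun m hm => lt_of_lt_of_le (Finset.mem_range.mp hm) hsT) from by ext t; simp [hF],
      Finset.card_attachFin, Finset.card_range]
  have hcardFc : (Fᶜ).card = T - s := by
    rw [Finset.card_compl, hcardF, Fintype.card_fin]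
  have hAlb : (s : ℝ) * Real.exp R ≤ A := by
    calc (s : ℝ) * Real.exp R = F.card • Real.exp R := by rw [hcardF, nsmul_eq_mul]
    _ ≤ A := Finset.card_nsmul_le_sum _ _ _ (fun t ht => by
        simp only [hF, Finset.mem_filter] at ht
        exact Real.exp_le_exp.mpr (hlow t ht.2))
  have hApos : 0 < A := lt_of_lt_of_le (by positivity) hAlb
  have hBub : B ≤ (T : ℝ) - s := by
    calc B ≤ (Fᶜ).card • (1 : ℝ) := Finset.sum_le_card_nsmul _ _ _ (fun t ht => by
          simp only [hF, Finset.mem_compl, Finset.mem_filter, Finset.mem_univ, true_and,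
            not_lt] at ht
          simpa using Real.exp_le_one_iff.mpr (hhigh t ht))
    _ = ((T - s : ℕ) : ℝ) := by rw [hcardFc, nsmul_eq_mul, mul_one]
    _ ≤ (T : ℝ) - s := by
        rw [Nat.cast_sub hsT]
  have hBnn : 0 ≤ B := Finset.sum_nonneg (fun t _ => (Real.exp_pos _).le)
  have hS : ∑ u, Real.exp (z u) = A + B := (Finset.sum_add_sum_compl F _).symm
  have hSpos : 0 < A + B := by linarith
  have hsum : ∑ t : Fin T, |(if (t : ℕ) < s then Real.exp (z t) / A else 0) - softmax z t|
      = 2 * B / (A + B) := by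
    rw [← Finset.sum_add_sum_compl F]
    have h1 : ∀ t ∈ F, |(if (t : ℕ) < s then Real.exp (z t) / A else 0) - softmax z t|
        = Real.exp (z t) / A - Real.exp (z t) / (A + B) := by
      intro t ht
      simp only [hF, Finset.mem_filter] at ht
      rw [if_pos ht.2, softmax, hS, abs_of_nonneg]
      have := Real.exp_pos (z t)
      apply sub_nonneg.mpr
      apply div_le_div_of_nonneg_left this.le hApos (by linarith)
    have h2 : ∀ t ∈ Fᶜ, |(if (t : ℕ) < s then Real.exp (z t) / A else 0) - softmax z t|
        = Real.exp (z t) / (A + B) := by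
      intro t ht
      simp only [hF, Finset.mem_compl, Finset.mem_filter, Finset.mem_univ, true_and,
        not_lt] at ht
      rw [if_neg (not_lt.mpr ht), softmax, hS, zero_sub, abs_neg, abs_of_nonneg (by positivity)]
    rw [Finset.sum_congr rfl h1, Finset.sum_congr rfl h2, Finset.sum_sub_distrib,
      ← Finset.sum_div, ← Finset.sum_div, ← Finset.sum_div, ← hA, ← hB]
    field_simp
    ring
  rw [hsum]
  have step1 : 2 * B / (A + B) ≤ 2 * B / A :=
    div_le_div_of_nonneg_left (by linarith) hApos (by linarith)
  have step2 : 2 * B / A ≤ 2 * ((T : ℝ) - s) / ((s : ℝ) * Real.exp R) := by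
    apply div_le_div₀ (by linarith) (by linarith) (by positivity) hAlb
  linarith
end
end
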